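/- Let T = (1,1,2,2,2,3,3,4,4,5,5,6,6,7,8,8,9,10,11,12,13,14) and E = (1,10,2,2,18,3,3,4,4,15,5,6,6,7,8,16,9,10,22,12,13,14), tuples of length 22. For every integer M ≥ 2, the coefficient of q² in the power series ( ∏_{j=1}^{22} (X^{T_j} − X^{−T_j}) ) · ∏_{n=1}^{M} [ (1 − q^n)^{4} · ∏_{j=1}^{22} (1 − q^n X^{2T_j})(1 − q^n X^{−2T_j}) ] (a power series in q with coefficients in ℤ[X, X⁻¹]) equals ∏_{j=1}^{22} (X^{E_j} − X^{−E_j}). (This expresses that the q⁴-coefficient of the weight-2 theta block φ_{587} = TB₂(T) is the baby theta block BTB(E).) -/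

import Mathlib

/-!
Modulo `X³` only the factors `n = 1, 2` of the product matter, and a product `∏ᵢ (1 - cᵢ Xⁿ)` is
`1 - p₁ Xⁿ + e₂ X²ⁿ` modulo `X³ⁿ`, where `pₖ = ∑ᵢ cᵢᵏ` and `2 e₂ = p₁² - p₂` (Newton). For the
theta factors the roots are `1, 1, 1, 1, X^{±2Tⱼ}`, so twice the wanted coefficient is
`BTB(T) · (p₁² - p₂ - 2 p₁)` with explicit Laurent polynomials `p₁, p₂`. The theorem is thus a single
identity in `ℤ[X, X⁻¹]`, which after multiplication by a power of `X` is an identity of ordinary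
polynomials.
-/

open LaurentPolynomial Finset

def Tlist : Fin 22 → ℤ :=
  ![1, 1, 2, 2, 2, 3, 3, 4, 4, 5, 5, 6, 6, 7, 8, 8, 9, 10, 11, 12, 13, 14]

def Elist : Fin 22 → ℤ :=
  ![1, 10, 2, 2, 18, 3, 3, 4, 4, 15, 5, 6, 6, 7, 8, 16, 9, 10, 22, 12, 13, 14]

lemma dvd_prod_sub_one {R ι : Type*} [CommRing R] {a : R} {s : Finset ι} {f : ι → R}
    (h : ∀ i ∈ s, a ∣ f i - 1) : a ∣ ∏ i ∈ s, f i - 1 :=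
  prod_induction f (fun x => a ∣ x - 1)
    (fun x y hx hy => by
      rw [show x * y - 1 = x * (y - 1) + (x - 1) by ring]
      exact dvd_add (dvd_mul_of_dvd_right hy x) hx)
    (by simp) h

namespace PowerSeries

variable {R : Type*} [CommRing R]

/-- The shape of `∏ᵢ (1 - cᵢ Xⁿ)` modulo `X³ⁿ`, recorded through the power sums `p₁ = ∑ cᵢ` and
`p₂ = ∑ cᵢ²`; `e₂` is the second elementary symmetric function, tied to them by Newton's identity. -/
def HasLowPowerSums (n : ℕ) (f : R⟦X⟧) (p₁ p₂ : R) : Prop :=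
  ∃ e₂ g, f = 1 - C p₁ * X ^ n + C e₂ * X ^ (2 * n) + g * X ^ (3 * n) ∧ 2 * e₂ = p₁ ^ 2 - p₂

namespace HasLowPowerSums

variable {n : ℕ} {f g : R⟦X⟧} {p₁ p₂ q₁ q₂ : R}

lemma one_sub_X_pow_mul_C (n : ℕ) (c : R) : HasLowPowerSums n (1 - X ^ n * C c) c (c ^ 2) :=
  ⟨0, 0, by simp only [map_zero]; ring, by ring⟩

lemma one : HasLowPowerSums n (1 : R⟦X⟧) 0 0 :=
  ⟨0, 0, by simp, by ring⟩

lemma mul (hf : HasLowPowerSums n f p₁ p₂) (hg : HasLowPowerSums n g q₁ q₂) :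
    HasLowPowerSums n (f * g) (p₁ + q₁) (p₂ + q₂) := by
  obtain ⟨e, f', rfl, he⟩ := hf
  obtain ⟨e', g', rfl, he'⟩ := hg
  refine ⟨e + e' + p₁ * q₁,
    f' * (1 - C q₁ * X ^ n + C e' * X ^ (2 * n) + g' * X ^ (3 * n))
      + (1 - C p₁ * X ^ n + C e * X ^ (2 * n)) * g'
      - C (p₁ * e' + e * q₁) + C (e * e') * X ^ n, ?_, by linear_combination he + he'⟩
  simp only [map_add, map_mul]
  ring

lemma pow (hf : HasLowPowerSums n f p₁ p₂) (k : ℕ) :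
    HasLowPowerSums n (f ^ k) (k * p₁) (k * p₂) := by
  induction k with
  | zero => simpa using one
  | succ k ih => simpa only [pow_succ, Nat.cast_succ, add_one_mul] using ih.mul hf

lemma prod {ι : Type*} (s : Finset ι) {f : ι → R⟦X⟧} {p₁ p₂ : ι → R}
    (h : ∀ i ∈ s, HasLowPowerSums n (f i) (p₁ i) (p₂ i)) :
    HasLowPowerSums n (∏ i ∈ s, f i) (∑ i ∈ s, p₁ i) (∑ i ∈ s, p₂ i) := by
  induction s using Finset.cons_induction with
  | empty => simpa using one
  | cons i s hi ih =>
    rw [forall_mem_cons] at h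
    simpa only [prod_cons, sum_cons] using h.1.mul (ih h.2)

lemma X_pow_dvd_sub_one (hf : HasLowPowerSums n f p₁ p₂) : X ^ n ∣ f - 1 := by
  obtain ⟨e, g, rfl, -⟩ := hf
  exact ⟨-C p₁ + C e * X ^ n + g * X ^ (2 * n), by ring⟩

end HasLowPowerSums

lemma coeff_mul_of_X_pow_dvd_sub_one {k : ℕ} (f : R⟦X⟧) {g : R⟦X⟧} (hg : X ^ (k + 1) ∣ g - 1) :
    coeff k (f * g) = coeff k f := by
  obtain ⟨r, hr⟩ := hg
  rw [show f * g = f + X ^ (k + 1) * (f * r) by linear_combination f * hr, map_add,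
    coeff_X_pow_mul', if_neg (by omega), add_zero]

theorem two_mul_coeff_two_C_mul_prod_Icc {F : ℕ → R⟦X⟧} {p₁ p₂ : R}
    (hF : ∀ n, 1 ≤ n → HasLowPowerSums n (F n) p₁ p₂) (a : R) {M : ℕ} (hM : 2 ≤ M) :
    2 * coeff 2 (C a * ∏ n ∈ Icc 1 M, F n) = a * (p₁ ^ 2 - p₂ - 2 * p₁) := by
  have hsplit : ∏ n ∈ Icc 1 M, F n = F 1 * F 2 * ∏ n ∈ Icc 3 M, F n := by
    rw [← insert_Icc_add_one_left_eq_Icc (by omega : 1 ≤ M),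
      ← insert_Icc_add_one_left_eq_Icc (by omega : 1 + 1 ≤ M), prod_insert (by simp),
      prod_insert (by simp), mul_assoc]
    rfl
  have htail : X ^ 3 ∣ ∏ n ∈ Icc 3 M, F n - 1 :=
    dvd_prod_sub_one fun n hn => (pow_dvd_pow X (mem_Icc.1 hn).1).trans
      (hF n (by linarith [(mem_Icc.1 hn).1])).X_pow_dvd_sub_one
  obtain ⟨e, g₁, hF₁, he⟩ := hF 1 le_rfl
  obtain ⟨e', g₂, hF₂, -⟩ := hF 2 (by norm_num)
  have hlow : C a * (F 1 * F 2) = C a * (1 - C p₁ * X ^ 1 + C (e - p₁) * X ^ 2)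
      + X ^ 3 * (C a * (C (p₁ ^ 2) - C (e * p₁) * X + g₁ * F 2
          + (1 - C p₁ * X + C e * X ^ 2) * X * (C e' + g₂ * X ^ 2))) := by
    rw [hF₁, hF₂]
    simp only [map_mul, map_sub, map_pow]
    ring
  rw [hsplit, ← mul_assoc, coeff_mul_of_X_pow_dvd_sub_one _ htail, hlow, map_add,
    coeff_X_pow_mul', if_neg (by norm_num), add_zero, coeff_C_mul]
  simp only [pow_one, map_sub, sub_mul, map_add, coeff_one, OfNat.ofNat_ne_zero, ↓reduceIte,
    coeff_succ_mul_X, coeff_succ_C, sub_self, coeff_C_mul, coeff_X_pow, mul_one, zero_add]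
  linear_combination a * he

end PowerSeries

namespace LaurentPolynomial

lemma T_sum {R ι : Type*} [CommSemiring R] (s : Finset ι) (t : ι → ℤ) :
    (T (∑ i ∈ s, t i) : R[T;T⁻¹]) = ∏ i ∈ s, T (t i) := by
  induction s using Finset.cons_induction with
  | empty => simp [T_zero]
  | cons i s hi ih => rw [prod_cons, sum_cons, T_add, ih]

lemma T_ofNat {R : Type*} [Semiring R] (n : ℕ) [n.AtLeastTwo] :
    (T (no_index (OfNat.ofNat n : ℤ)) : R[T;T⁻¹]) = T 1 ^ (OfNat.ofNat n : ℕ) := by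
  rw [T_pow, mul_one, Nat.cast_ofNat]

lemma two_ne_zero_int : (2 : ℤ[T;T⁻¹]) ≠ 0 := by
  have h := (Polynomial.toLaurent_ne_zero (R := ℤ)).2 (two_ne_zero : (2 : Polynomial ℤ) ≠ 0)
  rwa [map_ofNat] at h

variable {R : Type*} [CommRing R] {ι : Type*} [Fintype ι]

noncomputable def babyThetaBlock (t : ι → ℤ) : R[T;T⁻¹] := ∏ i, (T (t i) - T (-t i))

/-- `rootPowerSum t (2 * k)` is the `k`-th power sum of the roots `1, 1, 1, 1, T (± 2 tᵢ)` of
`thetaFactor t`. -/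
noncomputable def rootPowerSum (t : ι → ℤ) (m : ℤ) : R[T;T⁻¹] :=
  4 + ∑ i, (T (m * t i) + T (-(m * t i)))

lemma T_sum_mul_babyThetaBlock (t : ι → ℤ) :
    T (∑ i, t i) * babyThetaBlock t = ∏ i, (T (2 * t i) - 1 : R[T;T⁻¹]) := by
  rw [babyThetaBlock, T_sum, ← prod_mul_distrib]
  refine prod_congr rfl fun i _ => ?_
  rw [mul_sub, ← T_add, ← T_add, add_neg_cancel, T_zero, two_mul]

lemma T_mul_rootPowerSum (N : ℤ) (t : ι → ℤ) (m : ℤ) :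
    T N * rootPowerSum t m = 4 * T N + ∑ i, (T (N + m * t i) + T (N - m * t i) : R[T;T⁻¹]) := by
  simp only [rootPowerSum, mul_add, mul_sum, ← T_add, sub_eq_add_neg]
  ring

open PowerSeries in
noncomputable def thetaFactor (t : ι → ℤ) (n : ℕ) : R[T;T⁻¹]⟦X⟧ :=
  (1 - X ^ n) ^ 4 *
    ∏ i, ((1 - X ^ n * PowerSeries.C (T (2 * t i))) * (1 - X ^ n * PowerSeries.C (T (-(2 * t i)))))

open PowerSeries in
lemma hasLowPowerSums_thetaFactor (t : ι → ℤ) (n : ℕ) :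
    HasLowPowerSums n (thetaFactor t n : R[T;T⁻¹]⟦X⟧) (rootPowerSum t 2) (rootPowerSum t 4) := by
  have h₁ : HasLowPowerSums n (1 - X ^ n : R[T;T⁻¹]⟦X⟧) 1 1 := by
    simpa using HasLowPowerSums.one_sub_X_pow_mul_C n (1 : R[T;T⁻¹])
  have h := (h₁.pow 4).mul (HasLowPowerSums.prod univ fun i _ =>
    (HasLowPowerSums.one_sub_X_pow_mul_C n (T (2 * t i))).mul
      (HasLowPowerSums.one_sub_X_pow_mul_C n (T (-(2 * t i)))))
  convert h using 1
  · rfl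
  · simp [rootPowerSum]
  · simp [rootPowerSum, T_pow, ← mul_assoc]

end LaurentPolynomial

/-- Multiplying by `T 192 = T (∑ⱼ Tⱼ) * T 28 * T 28` makes every exponent nonnegative, so the
identity becomes one between polynomials in `T 1`. -/
lemma babyThetaBlock_Tlist_mul :
    babyThetaBlock Tlist *
        (rootPowerSum Tlist 2 ^ 2 - rootPowerSum Tlist 4 - 2 * rootPowerSum Tlist 2) =
      (2 * babyThetaBlock Elist : ℤ[T;T⁻¹]) := by
  have hT : T 136 * babyThetaBlock Tlist = ∏ j, (T (2 * Tlist j) - 1 : ℤ[T;T⁻¹]) := by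
    rw [← T_sum_mul_babyThetaBlock]; rfl
  have hE : T 190 * babyThetaBlock Elist = ∏ j, (T (2 * Elist j) - 1 : ℤ[T;T⁻¹]) := by
    rw [← T_sum_mul_babyThetaBlock]; rfl
  have h192 : (T 192 : ℤ[T;T⁻¹]) = T 136 * T 28 * T 28 := by rw [← T_add, ← T_add]; norm_num
  have h192' : (T 192 : ℤ[T;T⁻¹]) = T 2 * T 190 := by rw [← T_add]; norm_num
  have h56 : (T 56 : ℤ[T;T⁻¹]) = T 28 * T 28 := by rw [← T_add]; norm_num
  refine (isUnit_T 192).mul_left_cancel ?_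
  calc T 192 * (babyThetaBlock Tlist *
          (rootPowerSum Tlist 2 ^ 2 - rootPowerSum Tlist 4 - 2 * rootPowerSum Tlist 2))
      = (T 136 * babyThetaBlock Tlist) * ((T 28 * rootPowerSum Tlist 2) ^ 2
          - T 56 * rootPowerSum Tlist 4 - 2 * T 28 * (T 28 * rootPowerSum Tlist 2)) := by
        rw [h192, h56]; ring
    _ = T 2 * (2 * (T 190 * babyThetaBlock Elist)) := by
        rw [hT, hE, T_mul_rootPowerSum, T_mul_rootPowerSum]
        simp only [Fin.prod_univ_succ, Fin.sum_univ_succ, Fin.prod_univ_zero, Fin.sum_univ_zero,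
          Tlist, Elist, Matrix.cons_val_zero, Matrix.cons_val_succ]
        norm_num only [T_ofNat, T_zero]
        ring
    _ = T 192 * (2 * babyThetaBlock Elist) := by rw [h192']; ring

/-- The `q⁴`-coefficient of the weight-2 theta block `φ₅₈₇ = TB₂(T)`, i.e. the
`q²`-coefficient of the normalized product
`(∏_j (X^{T_j} − X^{−T_j})) ∏_{n=1}^{M} [(1 − qⁿ)⁴ ∏_j (1 − qⁿX^{2T_j})(1 − qⁿX^{−2T_j})]`,
equals the baby theta block `BTB(E) = ∏_j (X^{E_j} − X^{−E_j})`, for every `M ≥ 2`. -/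
theorem stmt_15 (M : ℕ) (hM : 2 ≤ M) :
    PowerSeries.coeff (R := LaurentPolynomial ℤ) 2
      ((PowerSeries.C (∏ j, (T (Tlist j) - T (-(Tlist j))))) *
        ∏ n ∈ Finset.Icc 1 M,
          ((1 - PowerSeries.X ^ n) ^ 4 *
            ∏ j, ((1 - PowerSeries.X ^ n * PowerSeries.C (T (2 * Tlist j))) *
              (1 - PowerSeries.X ^ n * PowerSeries.C (T (-(2 * Tlist j))))))) =
      ∏ j, (T (Elist j) - T (-(Elist j))) := by
  have h := PowerSeries.two_mul_coeff_two_C_mul_prod_Icc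
    (fun n _ => hasLowPowerSums_thetaFactor Tlist n) (babyThetaBlock (R := ℤ) Tlist) hM
  rw [babyThetaBlock_Tlist_mul] at h
  exact mul_left_cancel₀ two_ne_zero_int h
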